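/- Let A be a nonnegative irreducible tensor of order m and dimension n whose solid graph G^s(A) has r weakly connected components. Then every eigenvector x of A corresponding to ρ(A) satisfies x^{[(m-1)^r]} = e^{iθ}|x|^{[(m-1)^r]} for some real θ; equivalently D_x^{(m-1)^r} = e^{iθ} I where D_x = diag(x₁/|x₁|,…,x_n/|x_n|). -/

import Mathlib

/-
Let μ* be the largest μ for which some y ≥ 0 in the simplex satisfies μ y^{[m-1]} ≤ A y^{m-1}
(the Collatz–Wielandt maximum; it is attained by compactness). If μ bounds all such values, every
inequality μ y^{[m-1]} ≤ A y^{m-1} with y ≥ 0 is an equality: otherwise iterating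
y ↦ (A y^{m-1} + y^{[m-1]})^{[1/(m-1)]} spreads strictness along the arcs of the irreducible
tensor until all inequalities are strict, and a larger value would be attained. So μ* is an
eigenvalue, μ* ≤ ρ(A), and |x|, which satisfies ρ |x|^{[m-1]} ≤ A |x|^{m-1} by the triangle
inequality, is an eigenvector; by irreducibility it is positive. Equality in the triangle inequality
then says, with u = x / |x|, that u_{i₂} ⋯ u_{i_m} = u_{i₁}^{m-1} whenever a_{i₁ … i_m} ≠ 0.
Solid arcs make u^{[m-1]} constant on weak components, so it takes at most r values, and
irreducibility makes raising to the power m - 1 merge two of the values of u^{[(m-1)^t]} at each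
step, so one value is left after r steps.
-/

open scoped BigOperators

namespace PaperTensor

/-- A tensor of order `m` and dimension `|ι|`: entry `A i f` is `a_{i, f 0, …, f (m-2)}`. -/
abbrev Tensor (ι : Type) (m : ℕ) : Type := ι → (Fin (m - 1) → ι) → ℂ

variable {ι : Type} [Fintype ι] {m : ℕ}

/-- `(A x^{m-1})_i = ∑ a_{i i₂ … i_m} x_{i₂} ⋯ x_{i_m}`. -/
noncomputable def tApp (A : Tensor ι m) (x : ι → ℂ) (i : ι) : ℂ :=
  ∑ f : Fin (m - 1) → ι, A i f * ∏ j, x (f j)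

/-- `x ≠ 0` and `A x^{m-1} = l x^{[m-1]}`. -/
def IsEigPair (A : Tensor ι m) (l : ℂ) (x : ι → ℂ) : Prop :=
  x ≠ 0 ∧ ∀ i, tApp A x i = l * x i ^ (m - 1)

def Eigenvalues (A : Tensor ι m) : Set ℂ := {l | ∃ x, IsEigPair A l x}

/-- The spectral radius: the largest modulus of an eigenvalue. -/
noncomputable def specRad (A : Tensor ι m) : ℝ := sSup ((fun z : ℂ => ‖z‖) '' Eigenvalues A)

/-- All entries are nonnegative reals. -/
def Nonneg (A : Tensor ι m) : Prop := ∀ i f, ∃ r : ℝ, 0 ≤ r ∧ A i f = (r : ℂ)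

/-- Arc `(i,j)` of the directed graph `G(A)`. -/
def Arc (A : Tensor ι m) (i j : ι) : Prop := ∃ f, A i f ≠ 0 ∧ ∃ k, f k = j

/-- `G(A)` is strongly connected. -/
def WeaklyIrreducible (A : Tensor ι m) : Prop :=
  ∀ i j : ι, Relation.ReflTransGen (Arc A) i j

/-- The projective eigenvariety `PV_l(A) ⊆ ℙ^{n-1}`. -/
def PV (A : Tensor ι m) (l : ℂ) : Set (Projectivization ℂ (ι → ℂ)) :=
  {p | ∃ (v : ι → ℂ) (hv : v ≠ 0), Projectivization.mk ℂ v hv = p ∧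
        ∀ i, tApp A v i = l * v i ^ (m - 1)}

/-- `(D^{-(m-1)} A D)_{i₁…i_m} = d_{i₁}^{-(m-1)} a_{i₁…i_m} d_{i₂} ⋯ d_{i_m}`. -/
noncomputable def diagConj (d : ι → ℂ) (A : Tensor ι m) : Tensor ι m :=
  fun i f => (d i)⁻¹ ^ (m - 1) * A i f * ∏ j, d (f j)

/-- Combinatorial symmetry: the support is invariant under permutations of indices. -/
def CombSymm (A : Tensor ι m) : Prop :=
  ∀ i f i' f', (i ::ₘ Multiset.map f Finset.univ.val) = (i' ::ₘ Multiset.map f' Finset.univ.val) →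
    (A i f ≠ 0 ↔ A i' f' ≠ 0)

/-- Irreducibility of a tensor. -/
def Irred (A : Tensor ι m) : Prop :=
  ¬ ∃ S : Set ι, S.Nonempty ∧ S ≠ Set.univ ∧
      ∀ i ∈ S, ∀ f : Fin (m - 1) → ι, (∀ j, f j ∉ S) → A i f = 0

/-- Solid arc: `(i,j)` arising from a nonzero entry `a_{ij…j}`. -/
def SolidArc (A : Tensor ι m) (i j : ι) : Prop := A i (fun _ => j) ≠ 0

/-- Spectral `ℓ`-symmetry: `Spec(A) = e^{2πi/ℓ} Spec(A)`. -/
def SpectralSymm (A : Tensor ι m) (ℓ : ℕ) : Prop :=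
  Eigenvalues A = (fun z => Complex.exp ((2 * Real.pi / ℓ : ℝ) * Complex.I) * z) '' Eigenvalues A

/-- The set `𝔇^{(j)}(A)` (for the given `ℓ`), as diagonal matrices recorded by their diagonals. -/
def Dgj {n m : ℕ} [NeZero n] (A : Tensor (Fin n) m) (ℓ j : ℕ) : Set (Fin n → ℂ) :=
  {d | (∀ i, d i ≠ 0) ∧ d 0 = 1 ∧
    ∀ i f, A i f = Complex.exp (-(2 * Real.pi * j / ℓ : ℝ) * Complex.I) * diagConj d A i f}

/-- The group `𝔇(A) = ⋃_{j=0}^{ℓ-1} 𝔇^{(j)}(A)`. -/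
def DgAll {n m : ℕ} [NeZero n] (A : Tensor (Fin n) m) (ℓ : ℕ) : Set (Fin n → ℂ) :=
  {d | ∃ j < ℓ, d ∈ Dgj A ℓ j}

/-- `𝔇^{(0)}(A)`. -/
def Dg0 {n m : ℕ} [NeZero n] (A : Tensor (Fin n) m) : Set (Fin n → ℂ) :=
  {d | (∀ i, d i ≠ 0) ∧ d 0 = 1 ∧ ∀ i f, A i f = diagConj d A i f}

/-- Restriction (principal subtensor) of `A` to a set `S` of indices. -/
def restrict (A : Tensor ι m) (S : Set ι) : Tensor S m :=
  fun i f => A i.1 (fun j => (f j).1)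

end PaperTensor

open Set

lemma prod_lt_prod_of_nonneg_of_lt {κ : Type} [Fintype κ] [Nonempty κ] {y z : κ → ℝ}
    (hy : 0 ≤ y) (hyz : ∀ j, y j < z j) : ∏ j, y j < ∏ j, z j := by
  by_cases hpos : ∀ j, 0 < y j
  · exact Finset.prod_lt_prod_of_nonempty (fun j _ => hpos j) (fun j _ => hyz j)
      Finset.univ_nonempty
  · obtain ⟨j, hj⟩ := not_forall.mp hpos
    rw [Finset.prod_eq_zero (Finset.mem_univ j) (le_antisymm (not_lt.mp hj) (hy j))]
    exact Finset.prod_pos fun j _ => (hy j).trans_lt (hyz j)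

abbrev RealTensor (ι : Type) (k : ℕ) : Type := ι → (Fin k → ι) → ℝ

namespace RealTensor

variable {ι : Type} [Fintype ι] {k : ℕ} (a : RealTensor ι k)

noncomputable def eval (y : ι → ℝ) (i : ι) : ℝ := ∑ f, a i f * ∏ j, y (f j)

def Irreducible : Prop :=
  ∀ S : Set ι, S.Nonempty → S ≠ univ → ∃ i ∈ S, ∃ f : Fin k → ι, (∀ j, f j ∉ S) ∧ 0 < a i f

variable {a}

lemma eval_nonneg (ha : 0 ≤ a) {y : ι → ℝ} (hy : 0 ≤ y) (i : ι) : 0 ≤ a.eval y i :=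
  Finset.sum_nonneg fun f _ => mul_nonneg (ha i f) (Finset.prod_nonneg fun j _ => hy (f j))

lemma eval_mono (ha : 0 ≤ a) {y z : ι → ℝ} (hy : 0 ≤ y) (hyz : y ≤ z) (i : ι) :
    a.eval y i ≤ a.eval z i :=
  Finset.sum_le_sum fun f _ => mul_le_mul_of_nonneg_left
    (Finset.prod_le_prod (fun j _ => hy (f j)) fun j _ => hyz (f j)) (ha i f)

lemma single_le_eval (ha : 0 ≤ a) {y : ι → ℝ} (hy : 0 ≤ y) (i : ι) (f : Fin k → ι) :
    a i f * ∏ j, y (f j) ≤ a.eval y i :=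
  Finset.single_le_sum (f := fun f => a i f * ∏ j, y (f j))
    (fun f _ => mul_nonneg (ha i f) (Finset.prod_nonneg fun j _ => hy (f j))) (Finset.mem_univ f)

lemma eval_smul (c : ℝ) (y : ι → ℝ) (i : ι) : a.eval (c • y) i = c ^ k * a.eval y i := by
  simp only [eval, Finset.mul_sum, Pi.smul_apply, smul_eq_mul, Finset.prod_mul_distrib,
    Finset.prod_const, Finset.card_univ, Fintype.card_fin]
  exact Finset.sum_congr rfl fun f _ => by ring

lemma continuous_eval (i : ι) : Continuous fun y => a.eval y i := by
  unfold eval; fun_prop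

lemma eval_lt_eval (hk : k ≠ 0) (ha : 0 ≤ a) {y z : ι → ℝ} (hy : 0 ≤ y) (hyz : y ≤ z) {i : ι}
    {f : Fin k → ι} (hf : 0 < a i f) (hlt : ∀ j, y (f j) < z (f j)) : a.eval y i < a.eval z i := by
  have : Nonempty (Fin k) := ⟨⟨0, Nat.pos_of_ne_zero hk⟩⟩
  refine Finset.sum_lt_sum (fun f _ => mul_le_mul_of_nonneg_left
    (Finset.prod_le_prod (fun j _ => hy (f j)) fun j _ => hyz (f j)) (ha i f))
    ⟨f, Finset.mem_univ f, mul_lt_mul_of_pos_left ?_ hf⟩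
  exact prod_lt_prod_of_nonneg_of_lt (fun j => hy (f j)) hlt

lemma le_sum_of_mul_pow_le_eval (ha : 0 ≤ a) {y : ι → ℝ} (hy : 0 ≤ y) (hy0 : y ≠ 0) {c : ℝ}
    (h : ∀ i, c * y i ^ k ≤ a.eval y i) : c ≤ ∑ i, ∑ f, a i f := by
  obtain ⟨j, hj⟩ := Function.ne_iff.mp hy0
  have : Nonempty ι := ⟨j⟩
  obtain ⟨i, hi⟩ := Finite.exists_max y
  have hyi : 0 < y i := (lt_of_le_of_ne (hy j) (Ne.symm hj)).trans_le (hi j)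
  have hrow : a.eval y i ≤ (∑ f, a i f) * y i ^ k := by
    rw [Finset.sum_mul]
    refine Finset.sum_le_sum fun f _ => mul_le_mul_of_nonneg_left ?_ (ha i f)
    calc ∏ j, y (f j) ≤ ∏ _j : Fin k, y i :=
          Finset.prod_le_prod (fun j _ => hy (f j)) fun j _ => hi (f j)
      _ = y i ^ k := by simp
  calc c ≤ ∑ f, a i f := le_of_mul_le_mul_right ((h i).trans hrow) (pow_pos hyi k)
    _ ≤ ∑ i, ∑ f, a i f := Finset.single_le_sum (f := fun i => ∑ f, a i f)
        (fun i _ => Finset.sum_nonneg fun f _ => ha i f) (Finset.mem_univ i)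

-- The Collatz–Wielandt set.
def cwSet (a : RealTensor ι k) : Set (ℝ × (ι → ℝ)) :=
  {p | 0 ≤ p.1 ∧ 0 ≤ p.2 ∧ ∑ i, p.2 i = 1 ∧ ∀ i, p.1 * p.2 i ^ k ≤ a.eval p.2 i}

lemma normalize_mem_cwSet {μ : ℝ} (hμ : 0 ≤ μ) {y : ι → ℝ} (hy : 0 ≤ y) (hy0 : y ≠ 0)
    (h : ∀ i, μ * y i ^ k ≤ a.eval y i) : (μ, (∑ i, y i)⁻¹ • y) ∈ a.cwSet := by
  have hs : 0 < ∑ i, y i := by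
    obtain ⟨j, hj⟩ := Function.ne_iff.mp hy0
    exact Finset.sum_pos' (fun i _ => hy i)
      ⟨j, Finset.mem_univ j, lt_of_le_of_ne (hy j) (Ne.symm hj)⟩
  refine ⟨hμ, smul_nonneg (inv_nonneg.mpr hs.le) hy, ?_, fun i => ?_⟩
  · simp [← Finset.mul_sum, hs.ne']
  · dsimp only
    rw [eval_smul, Pi.smul_apply, smul_eq_mul, mul_pow, mul_left_comm]
    exact mul_le_mul_of_nonneg_left (h i) (by positivity)

lemma isCompact_cwSet (ha : 0 ≤ a) : IsCompact a.cwSet := by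
  have hfeas : IsClosed {p : ℝ × (ι → ℝ) | ∀ i, p.1 * p.2 i ^ k ≤ a.eval p.2 i} := by
    rw [ofPred_forall]
    exact isClosed_iInter fun i => isClosed_le (by fun_prop)
      ((continuous_eval i).comp continuous_snd)
  have hclosed : IsClosed a.cwSet :=
    (isClosed_le continuous_const continuous_fst).inter <|
      (isClosed_le continuous_const continuous_snd).inter <|
      (isClosed_eq (by fun_prop) continuous_const).inter hfeas
  refine (isCompact_Icc (a := (0, 0)) (b := (∑ i, ∑ f, a i f, 1))).of_isClosed_subset hclosed ?_
  rintro ⟨μ, y⟩ ⟨hμ, hy, hsum, h⟩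
  have hy0 : y ≠ 0 := fun h0 => by simp [h0] at hsum
  refine ⟨⟨hμ, hy⟩, le_sum_of_mul_pow_le_eval ha hy hy0 h, fun i => ?_⟩
  exact (Finset.single_le_sum (fun j _ => hy j) (Finset.mem_univ i)).trans hsum.le

lemma exists_max_cwSet [Nonempty ι] (ha : 0 ≤ a) :
    ∃ p ∈ a.cwSet, ∀ q ∈ a.cwSet, q.1 ≤ p.1 := by
  have hne : (0, fun _ => (Fintype.card ι : ℝ)⁻¹) ∈ a.cwSet := by
    refine ⟨le_rfl, fun i => by positivity, by simp, fun i => ?_⟩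
    rw [zero_mul]
    exact eval_nonneg ha (fun i => by positivity) i
  obtain ⟨p, hp, hmax⟩ := (isCompact_cwSet ha).exists_isMaxOn ⟨_, hne⟩ continuous_fst.continuousOn
  exact ⟨p, hp, fun q hq => hmax hq⟩

/- Maps `μ`-subeigenvectors to `μ`-subeigenvectors. The summand `y i ^ k` gives `c • y ≤ boost y`
where `c ^ k = 1 + μ`; hence strict indices stay strict, and an index with an arc into strict
indices only becomes strict. -/
noncomputable def boost (a : RealTensor ι k) (y : ι → ℝ) (i : ι) : ℝ :=
  (a.eval y i + y i ^ k) ^ (k⁻¹ : ℝ)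

section Boost

variable {μ c : ℝ} {y : ι → ℝ}

lemma boost_nonneg (ha : 0 ≤ a) (hy : 0 ≤ y) : 0 ≤ a.boost y := fun i =>
  Real.rpow_nonneg (add_nonneg (eval_nonneg ha hy i) (pow_nonneg (hy i) k)) _

lemma boost_pow (hk : k ≠ 0) (ha : 0 ≤ a) (hy : 0 ≤ y) (i : ι) :
    a.boost y i ^ k = a.eval y i + y i ^ k :=
  Real.rpow_inv_natCast_pow (add_nonneg (eval_nonneg ha hy i) (pow_nonneg (hy i) k)) hk

lemma smul_le_boost (hk : k ≠ 0) (ha : 0 ≤ a) (hc : 0 ≤ c) (hck : c ^ k = 1 + μ) (hy : 0 ≤ y)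
    (h : ∀ i, μ * y i ^ k ≤ a.eval y i) : c • y ≤ a.boost y := fun i => by
  refine (pow_le_pow_iff_left₀ (mul_nonneg hc (hy i)) (boost_nonneg ha hy i) hk).mp ?_
  rw [mul_pow, hck, boost_pow hk ha hy]
  linarith [h i]

lemma mul_lt_boost (hk : k ≠ 0) (ha : 0 ≤ a) (hc : 0 ≤ c) (hck : c ^ k = 1 + μ) (hy : 0 ≤ y)
    {i : ι} (h : μ * y i ^ k < a.eval y i) : c * y i < a.boost y i := by
  refine (pow_lt_pow_iff_left₀ (mul_nonneg hc (hy i)) (boost_nonneg ha hy i) hk).mp ?_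
  rw [mul_pow, hck, boost_pow hk ha hy]
  linarith

lemma one_add_mul_boost_pow (hk : k ≠ 0) (ha : 0 ≤ a) (hck : c ^ k = 1 + μ) (hy : 0 ≤ y)
    (i : ι) : (1 + μ) * a.boost y i ^ k = a.eval (c • y) i + (c * y i) ^ k := by
  rw [eval_smul, mul_pow, hck, boost_pow hk ha hy]
  ring

lemma mul_boost_pow_le_eval (hk : k ≠ 0) (ha : 0 ≤ a) (hc : 0 ≤ c) (hck : c ^ k = 1 + μ)
    (hy : 0 ≤ y) (h : ∀ i, μ * y i ^ k ≤ a.eval y i) (i : ι) :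
    μ * a.boost y i ^ k ≤ a.eval (a.boost y) i := by
  have hle := smul_le_boost hk ha hc hck hy h
  have hcy : 0 ≤ c • y := smul_nonneg hc hy
  have h₁ := one_add_mul_boost_pow hk ha hck hy i
  have h₂ := eval_mono ha hcy hle i
  have h₃ := pow_le_pow_left₀ (hcy i) (hle i) k
  simp only [Pi.smul_apply, smul_eq_mul] at h₃
  linarith

lemma mul_boost_pow_lt_eval (hk : k ≠ 0) (ha : 0 ≤ a) (hc : 0 ≤ c) (hck : c ^ k = 1 + μ)
    (hy : 0 ≤ y) (h : ∀ i, μ * y i ^ k ≤ a.eval y i) {i : ι}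
    (hi : μ * y i ^ k < a.eval y i ∨ ∃ f, 0 < a i f ∧ ∀ j, μ * y (f j) ^ k < a.eval y (f j)) :
    μ * a.boost y i ^ k < a.eval (a.boost y) i := by
  have hle := smul_le_boost hk ha hc hck hy h
  have hcy : 0 ≤ c • y := smul_nonneg hc hy
  have h₁ := one_add_mul_boost_pow hk ha hck hy i
  have h₂ := eval_mono ha hcy hle i
  have h₃ := pow_le_pow_left₀ (hcy i) (hle i) k
  simp only [Pi.smul_apply, smul_eq_mul] at h₃
  rcases hi with hi | ⟨f, hf, hfj⟩
  · have h₄ := pow_lt_pow_left₀ (mul_lt_boost hk ha hc hck hy hi) (mul_nonneg hc (hy i)) hk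
    linarith
  · have h₄ := eval_lt_eval hk ha hcy hle hf fun j => mul_lt_boost hk ha hc hck hy (hfj j)
    linarith

lemma exists_pos_forall_mul_pow_lt_eval (hk : k ≠ 0) (ha : 0 ≤ a) (hirr : a.Irreducible)
    (hc : 0 ≤ c) (hck : c ^ k = 1 + μ) (hy : 0 ≤ y) (h : ∀ i, μ * y i ^ k ≤ a.eval y i)
    (hstrict : ∃ i, μ * y i ^ k < a.eval y i) :
    ∃ z : ι → ℝ, (∀ i, 0 < z i) ∧ ∀ i, μ * z i ^ k < a.eval z i := by
  induction hN : {i | ¬ μ * y i ^ k < a.eval y i}.ncard using Nat.strong_induction_on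
    generalizing y with
  | _ N ih =>
    rcases eq_empty_or_nonempty {i | ¬ μ * y i ^ k < a.eval y i} with hS | hS
    · have hall : ∀ i, μ * y i ^ k < a.eval y i := fun i => by
        by_contra hi
        exact hS.subset hi
      exact ⟨a.boost y,
        fun i => (mul_nonneg hc (hy i)).trans_lt (mul_lt_boost hk ha hc hck hy (hall i)),
        fun i => mul_boost_pow_lt_eval hk ha hc hck hy h (Or.inl (hall i))⟩
    · obtain ⟨i₀, hi₀⟩ := hstrict
      obtain ⟨i, hiS, f, hfS, hf⟩ :=
        hirr _ hS ((ne_univ_iff_exists_notMem _).mpr ⟨i₀, fun h => h hi₀⟩)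
      have hfS' : ∀ j, μ * y (f j) ^ k < a.eval y (f j) := fun j => not_not.mp (hfS j)
      have hsub : {i | ¬ μ * a.boost y i ^ k < a.eval (a.boost y) i} ⊂
          {i | ¬ μ * y i ^ k < a.eval y i} := by
        refine ssubset_of_subset_of_ne (fun l hl hly => hl ?_) fun heq => ?_
        · exact mul_boost_pow_lt_eval hk ha hc hck hy h (Or.inl hly)
        · exact (heq ▸ hiS : i ∈ {i | ¬ μ * a.boost y i ^ k < a.eval (a.boost y) i})
            (mul_boost_pow_lt_eval hk ha hc hck hy h (Or.inr ⟨f, hf, hfS'⟩))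
      exact ih _ (hN ▸ ncard_lt_ncard hsub (toFinite _)) (boost_nonneg ha hy)
        (mul_boost_pow_le_eval hk ha hc hck hy h)
        ⟨i₀, mul_boost_pow_lt_eval hk ha hc hck hy h (Or.inl hi₀)⟩ rfl

end Boost

lemma eval_eq_of_forall_cwSet_le (hk : k ≠ 0) (ha : 0 ≤ a) (hirr : a.Irreducible) {μ : ℝ}
    (hμ : 0 ≤ μ) (hmax : ∀ p ∈ a.cwSet, p.1 ≤ μ) {y : ι → ℝ} (hy : 0 ≤ y)
    (h : ∀ i, μ * y i ^ k ≤ a.eval y i) (i : ι) : a.eval y i = μ * y i ^ k := by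
  by_contra hi
  obtain ⟨z, hz, hzlt⟩ := exists_pos_forall_mul_pow_lt_eval hk ha hirr
    (Real.rpow_nonneg (by linarith) _) (Real.rpow_inv_natCast_pow (by linarith) hk) hy h
    ⟨i, lt_of_le_of_ne (h i) (Ne.symm hi)⟩
  have : Nonempty ι := ⟨i⟩
  obtain ⟨i₁, hi₁⟩ := Finite.exists_min fun i => a.eval z i / z i ^ k
  have hμ' : μ < a.eval z i₁ / z i₁ ^ k := (lt_div_iff₀ (pow_pos (hz i₁) k)).mpr (hzlt i₁)
  have hfeas : ∀ i, a.eval z i₁ / z i₁ ^ k * z i ^ k ≤ a.eval z i := fun i =>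
    (le_div_iff₀ (pow_pos (hz i) k)).mp (hi₁ i)
  have hz0 : z ≠ 0 := fun h0 => (hz i).ne' (congrFun h0 i)
  have := hmax _ (normalize_mem_cwSet (hμ.trans hμ'.le) (fun i => (hz i).le) hz0 hfeas)
  exact this.not_gt hμ'

lemma pos_of_eval_eq (hk : k ≠ 0) (ha : 0 ≤ a) (hirr : a.Irreducible) {μ : ℝ} {y : ι → ℝ}
    (hy : 0 ≤ y) (hy0 : y ≠ 0) (h : ∀ i, a.eval y i = μ * y i ^ k) (i : ι) : 0 < y i := by
  by_contra hi
  obtain ⟨j, hj⟩ := Function.ne_iff.mp hy0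
  obtain ⟨l, hl, f, hf, haf⟩ := hirr {i | y i = 0} ⟨i, le_antisymm (not_lt.mp hi) (hy i)⟩
    (ne_univ_iff_exists_notMem _ |>.mpr ⟨j, hj⟩)
  have hl : y l = 0 := hl
  have hpos : 0 < a l f * ∏ j, y (f j) :=
    mul_pos haf (Finset.prod_pos fun j _ => lt_of_le_of_ne (hy _) (Ne.symm (hf j)))
  have := single_le_eval ha hy l f
  rw [h l, hl, zero_pow hk, mul_zero] at this
  linarith

end RealTensor

section PowerValues

variable {κ M : Type*} [CommMonoid M] {N : ℕ} {w : κ → M}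

def PowFactorsOutside (N : ℕ) (w : κ → M) : Prop :=
  ∀ S : Set κ, S.Nonempty → S ≠ univ →
    ∃ i ∈ S, ∃ g : Fin N → κ, (∀ j, g j ∉ S) ∧ w i ^ N = ∏ j, w (g j)

lemma range_pow_pow_succ (t : ℕ) :
    range (fun i => w i ^ N ^ (t + 1)) = (· ^ N) '' range (fun i => w i ^ N ^ t) := by
  rw [← range_comp]
  congr 1
  funext i
  simp only [Function.comp_apply, ← pow_mul, pow_succ]

variable [Finite κ]

/- Taking for `S` the indices whose value differs from that of `i₀`, the `N`-th power identifies
the value of the resulting `i ∈ S` with that of `i₀`. -/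
lemma ncard_range_pow_pow_succ_lt (hw : PowFactorsOutside N w) {t : ℕ}
    (ht : 1 < (range fun i => w i ^ N ^ t).ncard) :
    (range fun i => w i ^ N ^ (t + 1)).ncard < (range fun i => w i ^ N ^ t).ncard := by
  rw [range_pow_pow_succ]
  refine lt_of_le_of_ne (ncard_image_le (toFinite _)) fun heq => ?_
  obtain ⟨_, _, ⟨i₀, rfl⟩, ⟨i₁, rfl⟩, hne⟩ := (one_lt_ncard_iff (toFinite _)).mp ht
  obtain ⟨i, hi, g, hg, hwi⟩ := hw {i | w i ^ N ^ t ≠ w i₀ ^ N ^ t} ⟨i₁, hne.symm⟩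
    fun h => (h.symm ▸ mem_univ i₀ : i₀ ∈ {i | w i ^ N ^ t ≠ w i₀ ^ N ^ t}) rfl
  have hg' : ∀ j, w (g j) ^ N ^ t = w i₀ ^ N ^ t := fun j => not_not.mp (hg j)
  refine hi ((ncard_image_iff (toFinite _)).mp heq ⟨i, rfl⟩ ⟨i₀, rfl⟩ ?_)
  calc (w i ^ N ^ t) ^ N = (w i ^ N) ^ N ^ t := by rw [← pow_mul, ← pow_mul, mul_comm]
    _ = ∏ j : Fin N, w (g j) ^ N ^ t := by rw [hwi, Finset.prod_pow]
    _ = (w i₀ ^ N ^ t) ^ N := by simp [hg']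

lemma ncard_range_pow_pow_add (hw : PowFactorsOutside N w) (s t : ℕ) :
    (range fun i => w i ^ N ^ (s + t)).ncard ≤ 1 ∨
      (range fun i => w i ^ N ^ (s + t)).ncard + t ≤ (range fun i => w i ^ N ^ s).ncard := by
  induction t with
  | zero => simp
  | succ t ih =>
    rw [← add_assoc]
    have hle : (range fun i => w i ^ N ^ (s + t + 1)).ncard ≤
        (range fun i => w i ^ N ^ (s + t)).ncard := by
      rw [range_pow_pow_succ]
      exact ncard_image_le (toFinite _)
    rcases le_or_gt (range fun i => w i ^ N ^ (s + t)).ncard 1 with h | h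
    · exact Or.inl (hle.trans h)
    · have := ncard_range_pow_pow_succ_lt hw h
      omega

theorem pow_pow_eq_of_ncard_range_pow_le (hw : PowFactorsOutside N w) {r : ℕ}
    (hr : (range fun i => w i ^ N).ncard ≤ r) (i i' : κ) : w i ^ N ^ r = w i' ^ N ^ r := by
  have hr1 : 1 ≤ r := hr.trans' ((ncard_pos (toFinite _)).mpr ⟨_, i, rfl⟩)
  have h := ncard_range_pow_pow_add hw 1 (r - 1)
  simp only [pow_one, Nat.add_sub_cancel' hr1] at h
  have hle : (range fun i => w i ^ N ^ r).ncard ≤ 1 := by omega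
  exact (ncard_le_one (toFinite _)).mp hle _ ⟨i, rfl⟩ _ ⟨i', rfl⟩

end PowerValues

lemma ncard_range_le_card_quot {α β : Type*} [Finite α] {R : α → α → Prop} {F : α → β}
    (hF : ∀ a b, R a b → F a = F b) : (range F).ncard ≤ Nat.card (Quot R) := by
  rw [← Nat.card_coe_set_eq, show range F = range (Quot.lift F hF ∘ Quot.mk R) from rfl,
    Quot.mk_surjective.range_comp]
  exact Finite.card_range_le _

lemma div_norm_eq_of_norm_sum_eq {κ : Type} [Fintype κ] {z : κ → ℂ}
    (h : ‖∑ l, z l‖ = ∑ l, ‖z l‖) {l : κ} (hl : z l ≠ 0) :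
    z l / ‖z l‖ = (∑ l, z l) / ‖∑ l, z l‖ := by
  classical
  have hrest : ‖∑ l, z l - z l‖ ≤ ∑ l' ∈ Finset.univ.erase l, ‖z l'‖ := by
    rw [← Finset.sum_erase_eq_sub (Finset.mem_univ l)]
    exact norm_sum_le _ _
  have hadd : ‖z l + (∑ l, z l - z l)‖ = ‖z l‖ + ‖∑ l, z l - z l‖ := by
    refine le_antisymm (norm_add_le _ _) ?_
    calc ‖z l‖ + ‖∑ l, z l - z l‖ ≤ ‖z l‖ + ∑ l' ∈ Finset.univ.erase l, ‖z l'‖ := by gcongr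
      _ = ‖∑ l, z l‖ := by rw [Finset.add_sum_erase _ (fun l => ‖z l‖) (Finset.mem_univ l), h]
      _ = ‖z l + (∑ l, z l - z l)‖ := by rw [add_sub_cancel]
  have hray : SameRay ℝ (z l) (∑ l, z l) := by
    simpa using (SameRay.refl (z l)).add_right (sameRay_iff_norm_add.mpr hadd)
  have hs : ∑ l, z l ≠ 0 := norm_pos_iff.mp <| h ▸ (norm_pos_iff.mpr hl).trans_le
    (Finset.single_le_sum (fun l _ => norm_nonneg (z l)) (Finset.mem_univ l))
  have := (sameRay_iff_inv_norm_smul_eq_of_ne hl hs).mp hray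
  simpa [Complex.real_smul, div_eq_inv_mul] using this

namespace PaperTensor

variable {ι : Type} {m : ℕ} {A : Tensor ι m}

def Tensor.re (A : Tensor ι m) : RealTensor ι (m - 1) := fun i f => (A i f).re

lemma Nonneg.re_nonneg (hA : Nonneg A) : 0 ≤ A.re := fun i f => by
  obtain ⟨r, hr, h⟩ := hA i f
  simpa [Tensor.re, h] using hr

lemma Nonneg.ofReal_re (hA : Nonneg A) (i : ι) (f : Fin (m - 1) → ι) :
    ((A.re i f : ℝ) : ℂ) = A i f := by
  obtain ⟨r, -, h⟩ := hA i f
  simp [Tensor.re, h]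

lemma Nonneg.irreducible_re (hA : Nonneg A) (hirr : Irred A) : A.re.Irreducible := by
  intro S hS hSu
  by_contra hno
  push Not at hno
  refine hirr ⟨S, hS, hSu, fun i hi f hf => ?_⟩
  rw [← hA.ofReal_re, le_antisymm (hno i hi f hf) (hA.re_nonneg i f), Complex.ofReal_zero]

variable [Fintype ι]

lemma tApp_ofReal (hA : Nonneg A) (y : ι → ℝ) (i : ι) :
    tApp A (fun i => (y i : ℂ)) i = (A.re.eval y i : ℂ) := by
  simp [tApp, RealTensor.eval, hA.ofReal_re]

lemma norm_tApp_le (hA : Nonneg A) (v : ι → ℂ) (i : ι) :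
    ‖tApp A v i‖ ≤ A.re.eval (fun i => ‖v i‖) i := by
  refine (norm_sum_le _ _).trans_eq (Finset.sum_congr rfl fun f _ => ?_)
  rw [norm_mul, norm_prod, ← hA.ofReal_re, Complex.norm_of_nonneg (hA.re_nonneg i f)]

lemma IsEigPair.norm_ne_zero {μ : ℂ} {x : ι → ℂ} (hx : IsEigPair A μ x) :
    (fun i => ‖x i‖) ≠ 0 :=
  fun h => hx.1 (funext fun i => norm_eq_zero.mp (congrFun h i))

lemma norm_le_of_mem_eigenvalues (hA : Nonneg A) {μ : ℂ} (hμ : μ ∈ Eigenvalues A) :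
    ‖μ‖ ≤ ∑ i, ∑ f, A.re i f := by
  obtain ⟨v, hv⟩ := hμ
  refine RealTensor.le_sum_of_mul_pow_le_eval hA.re_nonneg (fun i => norm_nonneg (v i))
    hv.norm_ne_zero fun i => ?_
  simpa [hv.2 i] using norm_tApp_le hA v i

lemma specRad_nonneg : 0 ≤ specRad A :=
  Real.sSup_nonneg (by rintro _ ⟨z, -, rfl⟩; exact norm_nonneg z)

lemma norm_le_specRad (hA : Nonneg A) {μ : ℂ} (hμ : μ ∈ Eigenvalues A) : ‖μ‖ ≤ specRad A :=
  le_csSup ⟨_, by rintro _ ⟨z, hz, rfl⟩; exact norm_le_of_mem_eigenvalues hA hz⟩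
    (mem_image_of_mem _ hμ)

theorem IsEigPair.eval_norm_eq (hm : m - 1 ≠ 0) (hA : Nonneg A) (hirr : Irred A) {x : ι → ℂ}
    (hx : IsEigPair A (specRad A) x) (i : ι) :
    A.re.eval (fun i => ‖x i‖) i = specRad A * ‖x i‖ ^ (m - 1) := by
  have ha := hA.re_nonneg
  have hirr' := hA.irreducible_re hirr
  obtain ⟨j, -⟩ := Function.ne_iff.mp hx.1
  have : Nonempty ι := ⟨j⟩
  have hsub : ∀ i, specRad A * ‖x i‖ ^ (m - 1) ≤ A.re.eval (fun i => ‖x i‖) i := fun i => by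
    simpa [hx.2 i, abs_of_nonneg specRad_nonneg] using norm_tApp_le hA x i
  obtain ⟨⟨μ, y⟩, ⟨hμ, hy, hsum, hμy⟩, hmax⟩ := A.re.exists_max_cwSet ha
  have hμρ : μ ≤ specRad A := by
    have hyeig := RealTensor.eval_eq_of_forall_cwSet_le hm ha hirr' hμ hmax hy hμy
    have hy0 : (fun i => (y i : ℂ)) ≠ 0 := fun h0 => by
      simp [fun i => Complex.ofReal_eq_zero.mp (congrFun h0 i)] at hsum
    have : (μ : ℂ) ∈ Eigenvalues A :=
      ⟨_, hy0, fun i => by rw [tApp_ofReal hA, hyeig]; push_cast; rfl⟩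
    simpa [abs_of_nonneg hμ] using norm_le_specRad hA this
  exact RealTensor.eval_eq_of_forall_cwSet_le hm ha hirr' specRad_nonneg
    (fun p hp => (hmax p hp).trans hμρ) (fun i => norm_nonneg _) hsub i

lemma prod_div_norm_eq (hA : Nonneg A) {ρ : ℝ} {x : ι → ℂ}
    (hx : ∀ i, tApp A x i = ρ * x i ^ (m - 1))
    (hnorm : ∀ i, A.re.eval (fun i => ‖x i‖) i = ρ * ‖x i‖ ^ (m - 1)) (hx0 : ∀ i, x i ≠ 0)
    {i : ι} {f : Fin (m - 1) → ι} (hf : A i f ≠ 0) :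
    ∏ j, x (f j) / ‖x (f j)‖ = (x i / ‖x i‖) ^ (m - 1) := by
  set z : (Fin (m - 1) → ι) → ℂ := fun g => A i g * ∏ j, x (g j) with hz
  have hnorm_z : ∀ g, ‖z g‖ = A.re i g * ∏ j, ‖x (g j)‖ := fun g => by
    rw [norm_mul, norm_prod, ← hA.ofReal_re, Complex.norm_of_nonneg (hA.re_nonneg i g)]
  have hsum : ∑ g, z g = ρ * x i ^ (m - 1) := hx i
  have hsum_norm : ∑ g, ‖z g‖ = ρ * ‖x i‖ ^ (m - 1) := by
    simp_rw [hnorm_z]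
    exact hnorm i
  have hzf : z f ≠ 0 := mul_ne_zero hf (Finset.prod_ne_zero_iff.mpr fun j _ => hx0 _)
  have hρ : 0 < ρ := by
    have : 0 < ρ * ‖x i‖ ^ (m - 1) := hsum_norm ▸ (norm_pos_iff.mpr hzf).trans_le
      (Finset.single_le_sum (fun g _ => norm_nonneg (z g)) (Finset.mem_univ f))
    exact pos_of_mul_pos_left this (by positivity)
  have hnorm_sum : ‖∑ g, z g‖ = ρ * ‖x i‖ ^ (m - 1) := by
    rw [hsum, norm_mul, norm_pow, Complex.norm_real, Real.norm_of_nonneg hρ.le]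
  have key := div_norm_eq_of_norm_sum_eq (hnorm_sum.trans hsum_norm.symm) hzf
  rw [hnorm_z, hnorm_sum, hsum, hz] at key
  simp only [← hA.ofReal_re, Complex.ofReal_mul, Complex.ofReal_pow, Complex.ofReal_prod] at key
  rw [mul_div_mul_left _ _ (by rwa [hA.ofReal_re]),
    mul_div_mul_left _ _ (Complex.ofReal_ne_zero.mpr hρ.ne')] at key
  rw [Finset.prod_div_distrib, div_pow, key]

lemma IsEigPair.apply_ne_zero (hm : m - 1 ≠ 0) (hA : Nonneg A) (hirr : Irred A) {x : ι → ℂ}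
    (hx : IsEigPair A (specRad A) x) (i : ι) : x i ≠ 0 :=
  norm_pos_iff.mp <| RealTensor.pos_of_eval_eq hm hA.re_nonneg (hA.irreducible_re hirr)
    (fun i => norm_nonneg (x i)) hx.norm_ne_zero (hx.eval_norm_eq hm hA hirr) i

/-- If `A` is nonnegative irreducible and the solid graph `G^s(A)` has `r` weakly connected
components, then every eigenvector `x` for `ρ(A)` satisfies
`x^{[(m-1)^r]} = e^{iθ}|x|^{[(m-1)^r]}`. -/
theorem stmt13 {n m r : ℕ} (hm : 2 ≤ m) (A : Tensor (Fin n) m)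
    (hA : Nonneg A) (hirr : Irred A)
    (hr : Nat.card (Quot (fun a b : Fin n => SolidArc A a b ∨ SolidArc A b a)) = r)
    (x : Fin n → ℂ) (hx : IsEigPair A ((specRad A : ℝ) : ℂ) x) :
    ∃ θ : ℝ, ∀ i, x i ^ ((m - 1) ^ r) =
      Complex.exp ((θ : ℂ) * Complex.I) * (‖x i‖ : ℂ) ^ ((m - 1) ^ r) := by
  have hk : m - 1 ≠ 0 := by omega
  have hx0 := hx.apply_ne_zero hk hA hirr
  set u : Fin n → ℂ := fun i => x i / ‖x i‖
  have hphase {i f} (hf : A i f ≠ 0) : ∏ j, u (f j) = u i ^ (m - 1) :=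
    prod_div_norm_eq hA hx.2 (hx.eval_norm_eq hk hA hirr) hx0 hf
  have hspread : PowFactorsOutside (m - 1) u := fun S hS hSu => by
    obtain ⟨i, hi, f, hf, hpos⟩ := hA.irreducible_re hirr S hS hSu
    exact ⟨i, hi, f, hf, (hphase (by rw [← hA.ofReal_re]; exact_mod_cast hpos.ne')).symm⟩
  have hcard : (range fun i => u i ^ (m - 1)).ncard ≤ r := hr ▸ ncard_range_le_card_quot
    fun i j hij => hij.elim (fun h => by simpa using (hphase h).symm)
      fun h => by simpa using hphase h
  obtain ⟨i₀, -⟩ := Function.ne_iff.mp hx.1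
  set ζ := u i₀ ^ (m - 1) ^ r
  have hζ : Complex.exp (ζ.arg * Complex.I) = ζ := by
    simpa [ζ, u, hx0] using Complex.norm_mul_exp_arg_mul_I ζ
  refine ⟨ζ.arg, fun i => ?_⟩
  calc x i ^ (m - 1) ^ r = u i ^ (m - 1) ^ r * (‖x i‖ : ℂ) ^ (m - 1) ^ r := by
        rw [← mul_pow, div_mul_cancel₀ _ (by simpa using hx0 i)]
    _ = _ := by rw [pow_pow_eq_of_ncard_range_pow_le hspread hcard i i₀, hζ]

end PaperTensor
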